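/- A left S-semimodule P is k-projective if and only if every short exact sequence of left S-semimodules 0 → A → B → P → 0 is right-splitting, i.e., the surjective k-normal map g: B → P admits an S-linear section g': P → B with g ∘ g' = id_P. -/

import Mathlib

universe u

/-- `f` is `k`-normal. -/
def KNormal {S L M : Type*} [Semiring S] [AddCommMonoid L] [AddCommMonoid M]
    [Module S L] [Module S M] (f : L →ₗ[S] M) : Prop :=
  ∀ l₁ l₂ : L, f l₁ = f l₂ → ∃ k₁ k₂ : L, f k₁ = 0 ∧ f k₂ = 0 ∧ l₁ + k₁ = l₂ + k₂

/-- `P` is `k`-projective: lifting along every normal epimorphism. -/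
def KProjective (S : Type u) [Semiring S] (P : Type u) [AddCommMonoid P]
    [Module S P] : Prop :=
  ∀ (M N : Type u) (_ : AddCommMonoid M) (_ : AddCommMonoid N)
    (_ : Module S M) (_ : Module S N)
    (f : M →ₗ[S] N), Function.Surjective f → KNormal f →
    ∀ g : P →ₗ[S] N, ∃ h : P →ₗ[S] M, f.comp h = g

/-! A `k`-projective `P` lifts `id_P` along any normal epimorphism onto `P`, giving a section.
Conversely, for a normal epimorphism `f : M → N` and `g : P → N`, the projection
`P ×_N M → P` from the pullback is again a normal epimorphism, with kernel `ker f`, so it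
ends a short exact sequence `0 → ker f → P ×_N M → P → 0`; composing a section of it with the
projection to `M` lifts `g`. -/

namespace LinearMap

section Pullback

variable {S P M N : Type*} [Semiring S] [AddCommMonoid P] [AddCommMonoid M] [AddCommMonoid N]
  [Module S P] [Module S M] [Module S N] (f : M →ₗ[S] N) (g : P →ₗ[S] N)

def pullback : Submodule S (P × M) :=
  eqLocus (g ∘ₗ fst S P M) (f ∘ₗ snd S P M)

variable {f g}

theorem mem_pullback {x : P × M} : x ∈ pullback f g ↔ g x.1 = f x.2 :=
  mem_eqLocus

variable (f g)

def pullbackFst : pullback f g →ₗ[S] P := fst S P M ∘ₗ (pullback f g).subtype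

def pullbackSnd : pullback f g →ₗ[S] M := snd S P M ∘ₗ (pullback f g).subtype

def kerToPullback : ker f →ₗ[S] pullback f g :=
  (inr S P M ∘ₗ (ker f).subtype).codRestrict (pullback f g) fun a => by
    simp [mem_pullback, mem_ker.mp a.2]

@[simp]
theorem kerToPullback_apply (a : ker f) : (kerToPullback f g a : P × M) = (0, (a : M)) :=
  rfl

theorem comp_pullbackSnd : f ∘ₗ pullbackSnd f g = g ∘ₗ pullbackFst f g := by
  ext x
  exact (mem_pullback.mp x.2).symm

variable {f g}

theorem kerToPullback_injective : Function.Injective (kerToPullback f g) := fun _ _ hab =>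
  Subtype.ext (congrArg (fun x : pullback f g => (x : P × M).2) hab)

theorem pullbackFst_eq_zero_iff (x : pullback f g) :
    pullbackFst f g x = 0 ↔ ∃ a, kerToPullback f g a = x := by
  constructor
  · intro hx
    have hx' : (x : P × M).1 = 0 := hx
    have hfx : f (x : P × M).2 = 0 := by rw [← mem_pullback.mp x.2, hx', map_zero]
    exact ⟨⟨_, hfx⟩, Subtype.ext (Prod.ext hx'.symm rfl)⟩
  · rintro ⟨a, rfl⟩
    rfl

theorem pullbackFst_surjective (hf : Function.Surjective f) :
    Function.Surjective (pullbackFst f g) := fun p =>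
  let ⟨m, hm⟩ := hf (g p)
  ⟨⟨(p, m), mem_pullback.mpr hm.symm⟩, rfl⟩

/-- Normality transfers because the elements `(0, k)` with `f k = 0` lie in the pullback. -/
theorem kNormal_pullbackFst (hf : KNormal f) : KNormal (pullbackFst f g) := by
  rintro ⟨⟨p₁, m₁⟩, h₁⟩ ⟨⟨p₂, m₂⟩, h₂⟩ (hp : p₁ = p₂)
  subst hp
  obtain ⟨k₁, k₂, hk₁, hk₂, hk⟩ :=
    hf m₁ m₂ ((mem_pullback.mp h₁).symm.trans (mem_pullback.mp h₂))
  refine ⟨kerToPullback f g ⟨k₁, hk₁⟩, kerToPullback f g ⟨k₂, hk₂⟩, rfl, rfl, ?_⟩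
  exact Subtype.ext (Prod.ext (by simp) (by simpa using hk))

end Pullback

end LinearMap

open LinearMap

theorem KProjective.exists_rightInverse {S P B : Type u} [Semiring S] [AddCommMonoid P]
    [AddCommMonoid B] [Module S P] [Module S B] (hP : KProjective S P) (g : B →ₗ[S] P)
    (hg : Function.Surjective g) (hgn : KNormal g) : ∃ g' : P →ₗ[S] B, g ∘ₗ g' = LinearMap.id :=
  hP B P _ _ _ _ g hg hgn LinearMap.id

/-- `P` is `k`-projective iff every short exact sequence
`0 → A → B → P → 0` is right-splitting. -/
theorem kProjective_iff_ses_right_split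
    (S : Type u) [Semiring S] (P : Type u) [AddCommMonoid P] [Module S P] :
    KProjective S P ↔
      ∀ (A B : Type u) (_ : AddCommMonoid A) (_ : AddCommMonoid B)
        (_ : Module S A) (_ : Module S B)
        (f : A →ₗ[S] B) (g : B →ₗ[S] P),
        Function.Injective f → (∀ b : B, g b = 0 ↔ ∃ a : A, f a = b) →
        Function.Surjective g → KNormal g →
        ∃ g' : P →ₗ[S] B, g.comp g' = LinearMap.id := by
  refine ⟨fun hP A B _ _ _ _ f g _ _ hg hgn => hP.exists_rightInverse g hg hgn, ?_⟩
  intro hsplit M N _ _ _ _ f hf hfn g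
  obtain ⟨s, hs⟩ := hsplit (ker f) (pullback f g) _ _ _ _ (kerToPullback f g) (pullbackFst f g)
    kerToPullback_injective pullbackFst_eq_zero_iff (pullbackFst_surjective hf)
    (kNormal_pullbackFst hfn)
  refine ⟨pullbackSnd f g ∘ₗ s, ?_⟩
  rw [← comp_assoc, comp_pullbackSnd, comp_assoc, hs, comp_id]
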